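/- arXiv:math/0305336 — 5 statements merged into one kernel-verified Lean document; each statement's English description precedes it below -/
import Mathlib

section
/- Let 𝒜 be a central hyperplane arrangement in ℝⁿ with base region B. If the digraph 𝒬(𝒜,B) is acyclic, then the order dimension of 𝒫(𝒜,B) is at most the chromatic number of the basic graph G(𝒜,B). -/
open scoped RealInnerProductSpace

noncomputable section

variable {n : ℕ}

/-- A (linear) hyperplane in ℝⁿ: the zero set of a nonzero linear functional,
expressed via the inner product with a nonzero normal vector. -/
def IsHyperplane (H : Set (EuclideanSpace ℝ (Fin n))) : Prop :=
  ∃ v : EuclideanSpace ℝ (Fin n), v ≠ 0 ∧ H = {x | ⟪v, x⟫ = 0}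

/-- A central hyperplane arrangement: a finite nonempty collection of linear hyperplanes. -/
def IsCentralArrangement (A : Set (Set (EuclideanSpace ℝ (Fin n)))) : Prop :=
  A.Finite ∧ A.Nonempty ∧ ∀ H ∈ A, IsHyperplane H

/-- The complement of the union of the hyperplanes of the arrangement. -/
def arrComplement (A : Set (Set (EuclideanSpace ℝ (Fin n)))) : Set (EuclideanSpace ℝ (Fin n)) :=
  (⋃ H ∈ A, H)ᶜ

/-- A region of the arrangement: the closure of a connected component of the complement
of the union of the hyperplanes. -/
def IsRegion (A : Set (Set (EuclideanSpace ℝ (Fin n)))) (R : Set (EuclideanSpace ℝ (Fin n))) :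
    Prop :=
  ∃ x ∈ arrComplement A, R = closure (connectedComponentIn (arrComplement A) x)

/-- The hyperplane `H` separates the region `R` from the region `B`: their interiors lie on
strictly opposite sides of `H`. -/
def Separates (H R B : Set (EuclideanSpace ℝ (Fin n))) : Prop :=
  ∃ v : EuclideanSpace ℝ (Fin n), v ≠ 0 ∧ H = {x | ⟪v, x⟫ = 0} ∧
    (∀ x ∈ interior R, 0 < ⟪v, x⟫) ∧ (∀ x ∈ interior B, ⟪v, x⟫ < 0)

/-- S(R): the set of hyperplanes of `A` separating `R` from the base region `B`. -/
def sepSet (A : Set (Set (EuclideanSpace ℝ (Fin n)))) (B R : Set (EuclideanSpace ℝ (Fin n))) :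
    Set (Set (EuclideanSpace ℝ (Fin n))) :=
  {H | H ∈ A ∧ Separates H R B}

/-- The order of the poset of regions 𝒫(𝒜,B): containment of separating sets. -/
def regLE (A : Set (Set (EuclideanSpace ℝ (Fin n)))) (B R₁ R₂ : Set (EuclideanSpace ℝ (Fin n))) :
    Prop :=
  sepSet A B R₁ ⊆ sepSet A B R₂

/-- Strict order on regions. -/
def regLT (A : Set (Set (EuclideanSpace ℝ (Fin n)))) (B R₁ R₂ : Set (EuclideanSpace ℝ (Fin n))) :
    Prop :=
  regLE A B R₁ R₂ ∧ ¬ regLE A B R₂ R₁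

/-- The order dimension of the poset of regions 𝒫(𝒜,B): the smallest `d` such that it embeds
as an induced subposet of ℝᵈ with the componentwise order. -/
def regionOrderDim (A : Set (Set (EuclideanSpace ℝ (Fin n))))
    (B : Set (EuclideanSpace ℝ (Fin n))) : ℕ :=
  sInf {d : ℕ | ∃ f : {R : Set (EuclideanSpace ℝ (Fin n)) // IsRegion A R} → (Fin d → ℝ),
    ∀ R₁ R₂, regLE A B R₁.1 R₂.1 ↔ ∀ i, f R₁ i ≤ f R₂ i}

/-- The rank-two subarrangement of `A` consisting of all hyperplanes of `A`
containing `H₁ ∩ H₂`. -/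
def pencil (A : Set (Set (EuclideanSpace ℝ (Fin n)))) (H₁ H₂ : Set (EuclideanSpace ℝ (Fin n))) :
    Set (Set (EuclideanSpace ℝ (Fin n))) :=
  {H | H ∈ A ∧ H₁ ∩ H₂ ⊆ H}

/-- `H` is basic in the subarrangement `A'` relative to the base region `B`:
`H ∈ A'` and `H` bounds (meets in codimension one) the region `B'` of `A'` containing `B`. -/
def IsBasicIn (A' : Set (Set (EuclideanSpace ℝ (Fin n)))) (B H : Set (EuclideanSpace ℝ (Fin n))) :
    Prop :=
  H ∈ A' ∧ ∃ B', IsRegion A' B' ∧ B ⊆ B' ∧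
    Submodule.span ℝ (H ∩ B') = Submodule.span ℝ H

/-- The edge relation of the basic digraph 𝒟(𝒜,B): `H₁ → H₂` whenever `H₁` is basic in the
rank-two subarrangement consisting of all hyperplanes of `A` containing `H₁ ∩ H₂`. -/
def BasicEdge (A : Set (Set (EuclideanSpace ℝ (Fin n))))
    (B H₁ H₂ : Set (EuclideanSpace ℝ (Fin n))) : Prop :=
  H₁ ∈ A ∧ H₂ ∈ A ∧ H₁ ≠ H₂ ∧ IsBasicIn (pencil A H₁ H₂) B H₁

/-- The edge relation of the basic graph G(𝒜,B): `{H₁, H₂}` is an edge whenever `H₁` and `H₂`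
are the two basic hyperplanes of the rank-two subarrangement they determine. -/
def GEdge (A : Set (Set (EuclideanSpace ℝ (Fin n))))
    (B H₁ H₂ : Set (EuclideanSpace ℝ (Fin n))) : Prop :=
  H₁ ∈ A ∧ H₂ ∈ A ∧ H₁ ≠ H₂ ∧
    IsBasicIn (pencil A H₁ H₂) B H₁ ∧ IsBasicIn (pencil A H₁ H₂) B H₂

/-- The edge relation of the digraph 𝒬(𝒜,B): `H₁ → H₂` whenever `H₁` is basic and `H₂` is
non-basic in the rank-two subarrangement they determine. -/
def QEdge (A : Set (Set (EuclideanSpace ℝ (Fin n))))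
    (B H₁ H₂ : Set (EuclideanSpace ℝ (Fin n))) : Prop :=
  H₁ ∈ A ∧ H₂ ∈ A ∧ H₁ ≠ H₂ ∧
    IsBasicIn (pencil A H₁ H₂) B H₁ ∧ ¬ IsBasicIn (pencil A H₁ H₂) B H₂

/-- The chromatic number of the basic graph G(𝒜,B): the least number of colors in a proper
vertex coloring. -/
def basicGraphChromaticNumber (A : Set (Set (EuclideanSpace ℝ (Fin n))))
    (B : Set (EuclideanSpace ℝ (Fin n))) : ℕ :=
  sInf {c : ℕ | ∃ κ : Set (EuclideanSpace ℝ (Fin n)) → Fin c,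
    ∀ H₁ H₂, GEdge A B H₁ H₂ → κ H₁ ≠ κ H₂}

/-!
Colour the hyperplanes properly for G(𝒜,B) with χ colours and give each hyperplane `K` the weight
`ε ^ r K`, where `r K` counts the 𝒬-predecessors of `K` (so `r` increases along 𝒬, by acyclicity)
and `ε < 1 / |𝒜|`. Send a region `R` to the vector whose `i`-th coordinate is the total weight of
the hyperplanes of colour `i` in `S(R)`; this map is monotone. Conversely, let `H` have least rank
in `S(R₁) \ S(R₂)` and let `H'` of the same colour lie in `S(R₂) \ S(R₁)`. Scaled suitably, the
normals of the hyperplanes through `H ∩ H'` lie on a line, and membership in `S(R₁)` or `S(R₂)` is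
an affine condition along it; hence the hyperplane `b` at the end of this line on the side of `H`,
which is basic, lies in `S(R₁) \ S(R₂)`. Minimality of `H` forces `H` to be basic (else `b → H` in
𝒬), the colouring forces `H'` to be non-basic, so `H → H'` in 𝒬 and `r H < r H'`. As `ε` is small,
the weight of the colour of `H` is then larger for `R₁` than for `R₂`.
-/

section InnerProductSpace

variable {E : Type*} [NormedAddCommGroup E] [InnerProductSpace ℝ E]

theorem interior_subset_setOf_inner_pos {v : E} (hv : v ≠ 0) {S : Set E}
    (hS : S ⊆ {x | 0 ≤ ⟪v, x⟫}) : interior S ⊆ {x | 0 < ⟪v, x⟫} := by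
  have hf : innerSL ℝ v ≠ 0 := fun h => hv <| by
    simpa using congrArg (fun f : StrongDual ℝ E => f v) h
  calc interior S ⊆ interior (innerSL ℝ v ⁻¹' Set.Ici 0) := interior_mono hS
    _ = innerSL ℝ v ⁻¹' Set.Ioi 0 := by
      rw [← (ContinuousLinearMap.isOpenMap_of_ne_zero _ hf).preimage_interior_eq_interior_preimage
        (innerSL ℝ v).continuous, interior_Ici]
    _ = {x | 0 < ⟪v, x⟫} := rfl

theorem mem_span_of_forall_inner_eq_zero [FiniteDimensional ℝ E] {S : Set E} {w : E}
    (h : ∀ x, (∀ u ∈ S, ⟪u, x⟫ = 0) → ⟪w, x⟫ = 0) : w ∈ Submodule.span ℝ S := by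
  rw [← Submodule.orthogonal_orthogonal (Submodule.span ℝ S), Submodule.mem_orthogonal]
  intro y hy
  rw [real_inner_comm]
  exact h y fun u hu => hy u (Submodule.subset_span hu)

variable {ι : Type*} {P : Set ι} {s : ι → E}

theorem convex_setOf_forall_inner_neg : Convex ℝ {x | ∀ J ∈ P, ⟪s J, x⟫ < 0} := by
  simp only [Set.ofPred_forall]
  exact convex_iInter₂ fun J _ => convex_halfSpace_lt (innerₛₗ ℝ (s J)).isLinear 0

theorem setOf_forall_inner_nonpos_subset_closure {p : E} (hp : ∀ J ∈ P, ⟪s J, p⟫ < 0) :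
    {x | ∀ J ∈ P, ⟪s J, x⟫ ≤ 0} ⊆ closure {x | ∀ J ∈ P, ⟪s J, x⟫ < 0} := by
  intro x hx
  have hseg : openSegment ℝ x p ⊆ {x | ∀ J ∈ P, ⟪s J, x⟫ < 0} := by
    rintro _ ⟨a, b, ha, hb, -, rfl⟩ J hJ
    rw [inner_add_right, real_inner_smul_right, real_inner_smul_right]
    nlinarith [hx J hJ, hp J hJ]
  exact closure_mono hseg (closure_openSegment (𝕜 := ℝ) x p ▸ left_mem_segment ℝ x p)

end InnerProductSpace

theorem Set.ncard_setOf_transGen_lt {α : Type*} {r : α → α → Prop} {s : Set α} (hs : s.Finite)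
    (hr : ∀ a, ¬ Relation.TransGen r a a) {a b : α} (ha : a ∈ s) (hab : r a b) :
    {x ∈ s | Relation.TransGen r x a}.ncard < {x ∈ s | Relation.TransGen r x b}.ncard :=
  Set.ncard_lt_ncard ⟨fun _ hx => ⟨hx.1, hx.2.tail hab⟩, fun h => hr a (h ⟨ha, .single hab⟩).2⟩
    (hs.subset fun _ hx => hx.1)

theorem Finset.sum_pow_lt_pow {α : Type*} {T : Finset α} {h : α → ℕ} {k : ℕ} {ε : ℝ}
    (hε₀ : 0 < ε) (hε₁ : ε ≤ 1) (hT : T.card * ε < 1) (hk : ∀ x ∈ T, k < h x) :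
    ∑ x ∈ T, ε ^ h x < ε ^ k :=
  calc ∑ x ∈ T, ε ^ h x ≤ ∑ _x ∈ T, ε ^ (k + 1) :=
        Finset.sum_le_sum fun x hx => pow_le_pow_of_le_one hε₀.le hε₁ (hk x hx)
    _ = (T.card * ε) * ε ^ k := by rw [Finset.sum_const, nsmul_eq_mul, pow_succ]; ring
    _ < ε ^ k := mul_lt_of_lt_one_left (pow_pos hε₀ k) hT

theorem Finset.sum_lt_sum_of_mem_sdiff {α : Type*} [DecidableEq α] {S T : Finset α} {w : α → ℝ}
    (hw : ∀ x ∈ S, 0 ≤ w x) {m : α} (hmS : m ∈ S) (hmT : m ∉ T) (h : ∑ x ∈ T \ S, w x < w m) :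
    ∑ x ∈ T, w x < ∑ x ∈ S, w x :=
  calc ∑ x ∈ T, w x = ∑ x ∈ T ∩ S, w x + ∑ x ∈ T \ S, w x :=
        (Finset.sum_inter_add_sum_sdiff T S w).symm
    _ < w m + ∑ x ∈ T ∩ S, w x := by linarith
    _ = ∑ x ∈ insert m (T ∩ S), w x :=
        (Finset.sum_insert fun hm => hmT (Finset.mem_inter.1 hm).1).symm
    _ ≤ ∑ x ∈ S, w x := Finset.sum_le_sum_of_subset_of_nonneg
        (Finset.insert_subset hmS Finset.inter_subset_right) fun x hx _ => hw x hx

section ColorWeight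

variable {α ι : Type*} {F : Finset α} {κ : α → ι} {S₁ S₂ : Set α}

open Classical in
def colorWeight (F : Finset α) (κ : α → ι) (w : α → ℝ) (S : Set α) (i : ι) : ℝ :=
  ∑ x ∈ F with κ x = i ∧ x ∈ S, w x

theorem colorWeight_mono {w : α → ℝ} (hw : ∀ x, 0 ≤ w x) (h : S₁ ⊆ S₂) (i : ι) :
    colorWeight F κ w S₁ i ≤ colorWeight F κ w S₂ i := by
  refine Finset.sum_le_sum_of_subset_of_nonneg (fun x hx => ?_) fun x _ _ => hw x
  simp only [Finset.mem_filter] at hx ⊢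
  exact ⟨hx.1, hx.2.1, h hx.2.2⟩

theorem colorWeight_pow_lt {r : α → ℕ} {ε : ℝ} (hε₀ : 0 < ε) (hε : F.card * ε < 1) {m : α}
    (hm : m ∈ F) (hm₁ : m ∈ S₁) (hm₂ : m ∉ S₂)
    (hrank : ∀ x ∈ F, κ x = κ m → x ∈ S₂ → x ∉ S₁ → r m < r x) :
    colorWeight F κ (fun x => ε ^ r x) S₂ (κ m) < colorWeight F κ (fun x => ε ^ r x) S₁ (κ m) := by
  classical
  have hε₁ : ε ≤ 1 := by
    have : (1 : ℝ) ≤ F.card := Nat.one_le_cast.2 (Finset.card_pos.2 ⟨m, hm⟩)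
    nlinarith
  refine Finset.sum_lt_sum_of_mem_sdiff (m := m) (fun _ _ => by positivity) (by simp [hm, hm₁])
    (by simp [hm₂]) ?_
  refine Finset.sum_pow_lt_pow hε₀ hε₁ (lt_of_le_of_lt ?_ hε) fun x hx => ?_
  · gcongr
    exact fun x hx => (Finset.mem_filter.1 (Finset.mem_sdiff.1 hx).1).1
  · simp only [Finset.mem_sdiff, Finset.mem_filter, not_and] at hx
    exact hrank x hx.1.1 hx.1.2.1 hx.1.2.2 (hx.2 hx.1.1 hx.1.2.1)

end ColorWeight

section Regions

variable {A P : Set (Set (EuclideanSpace ℝ (Fin n)))} {B R K : Set (EuclideanSpace ℝ (Fin n))}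

theorem isOpen_arrComplement (hA : IsCentralArrangement A) : IsOpen (arrComplement A) := by
  refine (hA.1.isClosed_biUnion fun H hH => ?_).isOpen_compl
  obtain ⟨v, -, rfl⟩ := hA.2.2 H hH
  exact isClosed_eq (continuous_const.inner continuous_id) continuous_const

theorem arrComplement_anti (h : P ⊆ A) : arrComplement A ⊆ arrComplement P :=
  Set.compl_subset_compl.2 (Set.biUnion_subset_biUnion_left h)

theorem notMem_of_mem_arrComplement {x : EuclideanSpace ℝ (Fin n)} (hx : x ∈ arrComplement A)
    (hK : K ∈ A) : x ∉ K :=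
  fun hxK => hx (Set.mem_biUnion hK hxK)

theorem mem_interior_closure_connectedComponentIn (hA : IsCentralArrangement A)
    {x : EuclideanSpace ℝ (Fin n)} (hx : x ∈ arrComplement A) :
    x ∈ interior (closure (connectedComponentIn (arrComplement A) x)) :=
  interior_maximal subset_closure (isOpen_arrComplement hA).connectedComponentIn
    (mem_connectedComponentIn hx)

theorem IsRegion.exists_mem_interior (hA : IsCentralArrangement A) (hR : IsRegion A R) :
    ∃ p ∈ arrComplement A, p ∈ interior R ∧
      ∀ P ⊆ A, R ⊆ closure (connectedComponentIn (arrComplement P) p) := by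
  obtain ⟨x, hx, rfl⟩ := hR
  exact ⟨x, hx, mem_interior_closure_connectedComponentIn hA hx, fun P hP =>
    closure_mono (connectedComponentIn_mono x (arrComplement_anti hP))⟩

theorem IsRegion.interior_subset_or (hR : IsRegion A R) (hK : K ∈ A)
    {v : EuclideanSpace ℝ (Fin n)} (hv : v ≠ 0) (hKv : K = {x | ⟪v, x⟫ = 0}) :
    interior R ⊆ {x | 0 < ⟪v, x⟫} ∨ interior R ⊆ {x | ⟪v, x⟫ < 0} := by
  obtain ⟨y, hy, rfl⟩ := hR
  set U := connectedComponentIn (arrComplement A) y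
  have hcont (w : EuclideanSpace ℝ (Fin n)) : Continuous fun x => ⟪w, x⟫ :=
    continuous_const.inner continuous_id
  have hUK : U ⊆ {x | 0 < ⟪v, x⟫} ∪ {x | 0 < ⟪-v, x⟫} := fun x hx => by
    have : ⟪v, x⟫ ≠ 0 := by
      simpa [hKv] using notMem_of_mem_arrComplement (connectedComponentIn_subset _ _ hx) hK
    simpa [inner_neg_left, or_comm] using this.lt_or_gt
  have hside : ∀ w : EuclideanSpace ℝ (Fin n), w ≠ 0 → U ⊆ {x | 0 < ⟪w, x⟫} →
      interior (closure U) ⊆ {x | 0 < ⟪w, x⟫} := fun w hw hUw =>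
    interior_subset_setOf_inner_pos hw <| closure_minimal
      (fun x hx => show 0 ≤ ⟪w, x⟫ from (hUw hx).le) (isClosed_le continuous_const (hcont w))
  rcases isPreconnected_connectedComponentIn.subset_or_subset
      (isOpen_lt continuous_const (hcont v)) (isOpen_lt continuous_const (hcont (-v)))
      (Set.disjoint_left.2 fun x (hx : 0 < ⟪v, x⟫) (hx' : 0 < ⟪-v, x⟫) => by
        rw [inner_neg_left] at hx'
        linarith) hUK with h | h
  · exact .inl (hside v hv h)
  · exact .inr fun x hx => by simpa [inner_neg_left] using hside (-v) (neg_ne_zero.2 hv) h hx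

end Regions

/-- The scaling `⟪s K, p⟫ = -1` puts the normals of the hyperplanes through a codimension-two
subspace on an affine line. -/
def IsNormalizedAt (A : Set (Set (EuclideanSpace ℝ (Fin n)))) (p : EuclideanSpace ℝ (Fin n))
    (s : Set (EuclideanSpace ℝ (Fin n)) → EuclideanSpace ℝ (Fin n)) : Prop :=
  ∀ K ∈ A, K = {x | ⟪s K, x⟫ = 0} ∧ ⟪s K, p⟫ = -1

namespace IsNormalizedAt

variable {A P : Set (Set (EuclideanSpace ℝ (Fin n)))} {B R H H' K : Set (EuclideanSpace ℝ (Fin n))}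
  {p : EuclideanSpace ℝ (Fin n)} {s : Set (EuclideanSpace ℝ (Fin n)) → EuclideanSpace ℝ (Fin n)}

theorem exists_of_mem_arrComplement (hA : ∀ K ∈ A, IsHyperplane K) (hp : p ∈ arrComplement A) :
    ∃ s, IsNormalizedAt A p s := by
  have (K : Set (EuclideanSpace ℝ (Fin n))) : ∃ w : EuclideanSpace ℝ (Fin n),
      K ∈ A → K = {x | ⟪w, x⟫ = 0} ∧ ⟪w, p⟫ = -1 := by
    by_cases hK : K ∈ A
    · obtain ⟨v, -, rfl⟩ := hA K hK
      have hvp : ⟪v, p⟫ ≠ 0 := notMem_of_mem_arrComplement hp hK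
      refine ⟨(-⟪v, p⟫)⁻¹ • v, fun _ => ⟨?_, ?_⟩⟩
      · ext x
        simp [real_inner_smul_left, hvp]
      · rw [real_inner_smul_left, inv_neg, neg_mul, inv_mul_cancel₀ hvp]
    · exact ⟨0, fun h => absurd h hK⟩
  choose s hs using this
  exact ⟨s, fun K hK => hs K hK⟩

theorem mono (hs : IsNormalizedAt A p s) (h : P ⊆ A) : IsNormalizedAt P p s :=
  fun K hK => hs K (h hK)

theorem mem_iff (hs : IsNormalizedAt A p s) (hK : K ∈ A) {x : EuclideanSpace ℝ (Fin n)} :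
    x ∈ K ↔ ⟪s K, x⟫ = 0 :=
  Set.ext_iff.1 (hs K hK).1 x

theorem ne_zero (hs : IsNormalizedAt A p s) (hK : K ∈ A) : s K ≠ 0 := fun h => by
  simpa [h] using (hs K hK).2

theorem injOn (hs : IsNormalizedAt A p s) : Set.InjOn s A := fun K hK J hJ h => by
  rw [(hs K hK).1, (hs J hJ).1, h]

theorem subset_arrComplement (hs : IsNormalizedAt A p s) :
    {x | ∀ K ∈ A, ⟪s K, x⟫ < 0} ⊆ arrComplement A := by
  intro x hx hxA
  obtain ⟨K, hK, hxK⟩ := Set.mem_iUnion₂.1 hxA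
  exact (hx K hK).ne ((hs.mem_iff hK).1 hxK)

theorem exists_pencil_coord (hs : IsNormalizedAt A p s) (hH : H ∈ A) (hH' : H' ∈ A) :
    ∃ t : Set (EuclideanSpace ℝ (Fin n)) → ℝ,
      ∀ K ∈ pencil A H H', s K = s H + t K • (s H' - s H) := by
  have (K : Set (EuclideanSpace ℝ (Fin n))) :
      ∃ t : ℝ, K ∈ pencil A H H' → s K = s H + t • (s H' - s H) := by
    by_cases hK : K ∈ pencil A H H'
    · have hspan : s K ∈ Submodule.span ℝ {s H, s H'} := by
        refine mem_span_of_forall_inner_eq_zero fun x hx => (hs.mem_iff hK.1).1 (hK.2 ⟨?_, ?_⟩)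
        · exact (hs.mem_iff hH).2 (hx _ (by simp))
        · exact (hs.mem_iff hH').2 (hx _ (by simp))
      obtain ⟨a, b, hab⟩ := Submodule.mem_span_pair.1 hspan
      have hsum : a + b = 1 := by
        have h := (hs K hK.1).2
        rw [← hab, inner_add_left, real_inner_smul_left, real_inner_smul_left, (hs H hH).2,
          (hs H' hH').2] at h
        linarith
      refine ⟨b, fun _ => ?_⟩
      rw [← hab, show a = 1 - b by linarith]
      module
    · exact ⟨0, fun h => absurd h hK⟩
  choose t ht using this
  exact ⟨t, fun K hK => ht K hK⟩

theorem pencil_eq (hs : IsNormalizedAt A p s) (hH : H ∈ A) (hH' : H' ∈ A)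
    {K₁ K₂ : Set (EuclideanSpace ℝ (Fin n))} (h₁ : K₁ ∈ pencil A H H') (h₂ : K₂ ∈ pencil A H H')
    (hne : K₁ ≠ K₂) : pencil A K₁ K₂ = pencil A H H' := by
  obtain ⟨t, ht⟩ := hs.exists_pencil_coord hH hH'
  have hinter : K₁ ∩ K₂ = H ∩ H' := by
    refine subset_antisymm (fun x ⟨hx₁, hx₂⟩ => ?_) (Set.subset_inter h₁.2 h₂.2)
    rw [hs.mem_iff h₁.1, ht K₁ h₁, inner_add_left, real_inner_smul_left] at hx₁
    rw [hs.mem_iff h₂.1, ht K₂ h₂, inner_add_left, real_inner_smul_left] at hx₂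
    have ht₁₂ : t K₁ ≠ t K₂ := fun h =>
      hne (hs.injOn h₁.1 h₂.1 (by rw [ht K₁ h₁, ht K₂ h₂, h]))
    have hd : ⟪s H' - s H, x⟫ = 0 := by
      have : (t K₁ - t K₂) * ⟪s H' - s H, x⟫ = 0 := by linarith
      exact (mul_eq_zero.1 this).resolve_left (sub_ne_zero.2 ht₁₂)
    rw [hd, mul_zero, add_zero] at hx₁
    rw [inner_sub_left] at hd
    exact ⟨(hs.mem_iff hH).2 hx₁, (hs.mem_iff hH').2 (by linarith)⟩
  simp only [pencil, hinter]

theorem isBasicIn (hs : IsNormalizedAt P p s)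
    (hB : B ⊆ closure (connectedComponentIn (arrComplement P) p)) (hK : K ∈ P)
    {e : EuclideanSpace ℝ (Fin n)} {c : Set (EuclideanSpace ℝ (Fin n)) → ℝ}
    (hc : ∀ J ∈ P, 0 ≤ c J ∧ s J = s K + c J • e) : IsBasicIn P B K := by
  have hp : ∀ J ∈ P, ⟪s J, p⟫ < 0 := fun J hJ => by rw [(hs J hJ).2]; norm_num
  have hC : {x | ∀ J ∈ P, ⟪s J, x⟫ < 0} ⊆ connectedComponentIn (arrComplement P) p :=
    convex_setOf_forall_inner_neg.isPreconnected.subset_connectedComponentIn hp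
      hs.subset_arrComplement
  have hKB : K ∩ {x | ∀ J ∈ P, ⟪s J, x⟫ ≤ 0} ⊆
      K ∩ closure (connectedComponentIn (arrComplement P) p) :=
    Set.inter_subset_inter_right _
      ((setOf_forall_inner_nonpos_subset_closure hp).trans (closure_mono hC))
  refine ⟨hK, _, ⟨p, hs.subset_arrComplement hp, rfl⟩, hB,
    le_antisymm (Submodule.span_mono Set.inter_subset_left) (Submodule.span_le.2 fun x hx => ?_)⟩
  -- On `K` every `⟪s J, ·⟫` is a nonnegative multiple of `⟪e, ·⟫`, so `x` or `-x` lies in the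
  -- closed chamber.
  have hlin : ∀ y ∈ K, ∀ J ∈ P, ⟪s J, y⟫ = c J * ⟪e, y⟫ := fun y hy J hJ => by
    rw [(hc J hJ).2, inner_add_left, real_inner_smul_left, (hs.mem_iff hK).1 hy, zero_add]
  have hneg : -x ∈ K := by rw [hs.mem_iff hK, inner_neg_right, (hs.mem_iff hK).1 hx, neg_zero]
  rcases le_total ⟪e, x⟫ 0 with he | he
  · refine Submodule.subset_span (hKB ⟨hx, fun J hJ => ?_⟩)
    rw [hlin x hx J hJ]
    exact mul_nonpos_of_nonneg_of_nonpos (hc J hJ).1 he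
  · have hmem : -x ∈ Submodule.span ℝ (K ∩ closure (connectedComponentIn (arrComplement P) p)) := by
      refine Submodule.subset_span (hKB ⟨hneg, fun J hJ => ?_⟩)
      rw [hlin _ hneg J hJ, inner_neg_right, mul_neg, neg_nonpos]
      exact mul_nonneg (hc J hJ).1 he
    simpa using Submodule.neg_mem _ hmem

theorem mem_sepSet_iff (hs : IsNormalizedAt A p s) (hB : IsRegion A B) (hR : IsRegion A R)
    (hp : p ∈ interior B) {q : EuclideanSpace ℝ (Fin n)} (hq : q ∈ interior R) (hK : K ∈ A) :
    K ∈ sepSet A B R ↔ 0 < ⟪s K, q⟫ := by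
  constructor
  · rintro ⟨-, u, -, hKu, hRu, hBu⟩
    obtain ⟨μ, rfl⟩ : ∃ μ : ℝ, μ • s K = u := by
      refine Submodule.mem_span_singleton.1 (mem_span_of_forall_inner_eq_zero fun x hx => ?_)
      have hxK : x ∈ K := (hs.mem_iff hK).2 (hx _ rfl)
      rwa [hKu] at hxK
    have hμp := hBu p hp
    have hμq := hRu q hq
    rw [real_inner_smul_left, (hs K hK).2] at hμp
    rw [real_inner_smul_left] at hμq
    exact pos_of_mul_pos_right hμq (by linarith)
  · intro hKq
    refine ⟨hK, s K, hs.ne_zero hK, (hs K hK).1, ?_, ?_⟩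
    · refine (hR.interior_subset_or hK (hs.ne_zero hK) (hs K hK).1).resolve_right fun h => ?_
      have : ⟪s K, q⟫ < 0 := h hq
      linarith
    · refine (hB.interior_subset_or hK (hs.ne_zero hK) (hs K hK).1).resolve_left fun h => ?_
      have : 0 < ⟪s K, p⟫ := h hp
      linarith [(hs K hK).2]

end IsNormalizedAt

section Pencil

variable {A : Set (Set (EuclideanSpace ℝ (Fin n)))} {B R₁ R₂ H H' : Set (EuclideanSpace ℝ (Fin n))}

theorem exists_isBasicIn_pencil_mem_sdiff (hA : IsCentralArrangement A) (hB : IsRegion A B)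
    (hR₁ : IsRegion A R₁) (hR₂ : IsRegion A R₂)
    (hH : H ∈ sepSet A B R₁ \ sepSet A B R₂) (hH' : H' ∈ sepSet A B R₂ \ sepSet A B R₁) :
    ∃ b ∈ pencil A H H', IsBasicIn (pencil A H H') B b ∧ b ∈ sepSet A B R₁ \ sepSet A B R₂ := by
  obtain ⟨p, hpA, hpB, hBP⟩ := hB.exists_mem_interior hA
  obtain ⟨s, hs⟩ := IsNormalizedAt.exists_of_mem_arrComplement hA.2.2 hpA
  obtain ⟨q₁, -, hq₁, -⟩ := hR₁.exists_mem_interior hA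
  obtain ⟨q₂, -, hq₂, -⟩ := hR₂.exists_mem_interior hA
  set P := pencil A H H'
  have hPA : P ⊆ A := fun K hK => hK.1
  have hHP : H ∈ P := ⟨hH.1.1, Set.inter_subset_left⟩
  have hH'P : H' ∈ P := ⟨hH'.1.1, Set.inter_subset_right⟩
  obtain ⟨t, ht⟩ := hs.exists_pencil_coord hH.1.1 hH'.1.1
  set d := s H' - s H
  have htHH' : t H' - t H = 1 := by
    have hd : d ≠ 0 := sub_ne_zero.2 fun h => hH'.2 (hs.injOn hH'.1.1 hH.1.1 h ▸ hH.1)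
    have h : (t H' - t H - 1) • d = 0 := by
      calc (t H' - t H - 1) • d = (s H + t H' • d) - (s H + t H • d) - d := by module
        _ = 0 := by rw [← ht H' hH'P, ← ht H hHP, sub_self]
    linarith [(smul_eq_zero.1 h).resolve_right hd]
  obtain ⟨b, hbP, hbmin⟩ := Set.exists_min_image P t (hA.1.subset hPA) ⟨H, hHP⟩
  have hcoord : ∀ J ∈ P, s J = s b + (t J - t b) • d := fun J hJ => by
    rw [ht J hJ, ht b hbP]
    module
  refine ⟨b, hbP, (hs.mono hPA).isBasicIn (hBP P hPA) hbP fun J hJ =>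
    ⟨sub_nonneg.2 (hbmin J hJ), hcoord J hJ⟩, ?_⟩
  have hsep : ∀ {R : Set (EuclideanSpace ℝ (Fin n))} {q}, IsRegion A R → q ∈ interior R →
      ∀ J ∈ P, (J ∈ sepSet A B R ↔ 0 < ⟪s b, q⟫ + (t J - t b) * ⟪d, q⟫) :=
    fun hR hq J hJ => by
      rw [hs.mem_sepSet_iff hB hR hpB hq hJ.1, hcoord J hJ, inner_add_left, real_inner_smul_left]
  have e₁ := (hsep hR₁ hq₁ H hHP).1 hH.1
  have e₂ := not_lt.1 (mt (hsep hR₁ hq₁ H' hH'P).2 hH'.2)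
  have e₃ := not_lt.1 (mt (hsep hR₂ hq₂ H hHP).2 hH.2)
  have e₄ := (hsep hR₂ hq₂ H' hH'P).1 hH'.1
  have hbH := sub_nonneg.2 (hbmin H hHP)
  -- Both conditions are affine in the coordinate, and `b` lies beyond `H` as seen from `H'`.
  simp only [Set.mem_sdiff, hsep hR₁ hq₁ b hbP, hsep hR₂ hq₂ b hbP, sub_self, zero_mul,
    add_zero, not_lt]
  constructor
  · nlinarith
  · nlinarith

end Pencil

theorem exists_proper_coloring {A : Set (Set (EuclideanSpace ℝ (Fin n)))}
    {B : Set (EuclideanSpace ℝ (Fin n))} (hA : A.Finite) :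
    ∃ κ : Set (EuclideanSpace ℝ (Fin n)) → Fin (basicGraphChromaticNumber A B),
      ∀ H₁ H₂, GEdge A B H₁ H₂ → κ H₁ ≠ κ H₂ := by
  have := hA.to_subtype
  obtain ⟨k, ⟨e⟩⟩ := Finite.exists_equiv_fin A
  obtain ⟨κ, hκ⟩ := Set.exists_injOn_iff_injective.2
    ⟨Fin.castSucc ∘ e, (Fin.castSucc_injective k).comp e.injective⟩
  have : {c : ℕ | ∃ κ : Set (EuclideanSpace ℝ (Fin n)) → Fin c,
      ∀ H₁ H₂, GEdge A B H₁ H₂ → κ H₁ ≠ κ H₂}.Nonempty :=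
    ⟨k + 1, κ, fun H₁ H₂ h => hκ.ne h.1 h.2.1 h.2.2.1⟩
  exact Nat.sInf_mem this

theorem rank_lt_of_mem_sdiff {A : Set (Set (EuclideanSpace ℝ (Fin n)))}
    {B R₁ R₂ H H' : Set (EuclideanSpace ℝ (Fin n))} (hA : IsCentralArrangement A)
    (hB : IsRegion A B) (hR₁ : IsRegion A R₁) (hR₂ : IsRegion A R₂)
    {r : Set (EuclideanSpace ℝ (Fin n)) → ℕ} (hr : ∀ K K', QEdge A B K K' → r K < r K')
    {ι : Type*} {κ : Set (EuclideanSpace ℝ (Fin n)) → ι}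
    (hκ : ∀ H₁ H₂, GEdge A B H₁ H₂ → κ H₁ ≠ κ H₂)
    (hH : H ∈ sepSet A B R₁ \ sepSet A B R₂) (hmin : ∀ K ∈ sepSet A B R₁ \ sepSet A B R₂, r H ≤ r K)
    (hH' : H' ∈ sepSet A B R₂ \ sepSet A B R₁) (hcol : κ H' = κ H) : r H < r H' := by
  obtain ⟨b, hbP, hb, hbS⟩ := exists_isBasicIn_pencil_mem_sdiff hA hB hR₁ hR₂ hH hH'
  have hHP : H ∈ pencil A H H' := ⟨hH.1.1, Set.inter_subset_left⟩
  have hne : H ≠ H' := fun h => hH'.2 (h ▸ hH.1)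
  have hHb : IsBasicIn (pencil A H H') B H := by
    by_contra hHnb
    have hbH : b ≠ H := fun h => hHnb (h ▸ hb)
    obtain ⟨p, hpA, -⟩ := hB.exists_mem_interior hA
    obtain ⟨s, hs⟩ := IsNormalizedAt.exists_of_mem_arrComplement hA.2.2 hpA
    have hP := hs.pencil_eq hH.1.1 hH'.1.1 hbP hHP hbH
    exact (hr b H ⟨hbP.1, hH.1.1, hbH, hP ▸ hb, hP ▸ hHnb⟩).not_ge (hmin b hbS)
  have hH'nb : ¬ IsBasicIn (pencil A H H') B H' := fun h =>
    hκ H H' ⟨hH.1.1, hH'.1.1, hne, hHb, h⟩ hcol.symm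
  exact hr H H' ⟨hH.1.1, hH'.1.1, hne, hHb, hH'nb⟩

/-- **Corollary (Reading, Corollary 8).** If the digraph 𝒬(𝒜,B) is acyclic, then the order
dimension of 𝒫(𝒜,B) is at most the chromatic number of the basic graph G(𝒜,B). -/
theorem orderDim_le_chromaticNumber {n : ℕ}
    (A : Set (Set (EuclideanSpace ℝ (Fin n)))) (B : Set (EuclideanSpace ℝ (Fin n)))
    (hA : IsCentralArrangement A) (hB : IsRegion A B)
    (hQ : ∀ H, ¬ Relation.TransGen (QEdge A B) H H) :
    regionOrderDim A B ≤ basicGraphChromaticNumber A B := by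
  obtain ⟨κ, hκ⟩ := exists_proper_coloring (B := B) hA.1
  set F := hA.1.toFinset
  set r : Set (EuclideanSpace ℝ (Fin n)) → ℕ :=
    fun K => {J ∈ A | Relation.TransGen (QEdge A B) J K}.ncard
  have hr : ∀ K K', QEdge A B K K' → r K < r K' := fun K K' h =>
    Set.ncard_setOf_transGen_lt hA.1 hQ h.1 h
  set ε : ℝ := (F.card + 1 : ℝ)⁻¹
  have hε₀ : 0 < ε := by positivity
  have hε : F.card * ε < 1 := by
    rw [← div_eq_mul_inv, div_lt_one (by positivity)]
    linarith
  refine Nat.sInf_le ⟨fun R => colorWeight F κ (fun K => ε ^ r K) (sepSet A B R.1),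
    fun R₁ R₂ => ⟨fun h => colorWeight_mono (fun K => by positivity) h, fun h => ?_⟩⟩
  by_contra hS
  obtain ⟨H, hH, hmin⟩ := Set.exists_min_image (sepSet A B R₁.1 \ sepSet A B R₂.1) r
    (hA.1.subset fun K hK => hK.1.1) (Set.sdiff_nonempty.2 hS)
  refine (h (κ H)).not_gt (colorWeight_pow_lt hε₀ hε (hA.1.mem_toFinset.2 hH.1.1) hH.1 hH.2
    fun K _ hcol hK₂ hK₁ => ?_)
  exact rank_lt_of_mem_sdiff hA hB R₁.2 R₂.2 hr hκ hH hmin ⟨hK₂, hK₁⟩ hcol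
end
end

section
/- Let 𝒜 be a central hyperplane arrangement in ℝⁿ with base region B. The order dimension of 𝒫(𝒜,B) is at least the number of facets of B, and the number of facets of B is at least the rank of 𝒜. -/
/-!
Orient the normals `v H` so that the base point `x₀` of `B` is positive on all of them. Then
`B = {y | 0 ≤ ⟪v H, y⟫ for all H ∈ A}`, every region is the closure of a sign cone, and `S(R)` is
the set of walls on whose negative side `R` lies.

Order dimension: for a facet hyperplane `H`, a point just across the facet lies in a region `R_H`
with `S(R_H) = {H}`, and its antipode in a region `R'_H` with `S(R'_H) = A \ {H}`. Thus
`R_G ≤ R'_H` exactly when `G ≠ H`: a standard example, which needs a separate coordinate for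
each facet in any embedding into `ℝᵈ`.

Rank: a minimal subsystem of the inequalities cutting out `B` consists of facet hyperplanes, so `B`
is cut out by its facet inequalities. A vector orthogonal to all facet normals therefore lies in
`B ∩ -B`, hence on every hyperplane of `A`, so the facet normals span all normals.
-/

open scoped RealInnerProductSpace

noncomputable section

variable {n : ℕ}

/-- The rank of the arrangement `A`: the dimension of the span of its normal vectors,
i.e. of the orthogonal complement of the intersection of the hyperplanes. -/
def arrRank (A : Set (Set (EuclideanSpace ℝ (Fin n)))) : ℕ :=
  Module.finrank ℝ ((Submodule.span ℝ (⋂₀ A))ᗮ)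

/-- The hyperplanes of `A` containing a facet of the region `B`, i.e. meeting `B` in
codimension one.  These are in bijection with the facets of `B`. -/
def facetHyperplanes (A : Set (Set (EuclideanSpace ℝ (Fin n))))
    (B : Set (EuclideanSpace ℝ (Fin n))) : Set (Set (EuclideanSpace ℝ (Fin n))) :=
  {H | H ∈ A ∧ Submodule.span ℝ (H ∩ B) = Submodule.span ℝ H}

open Filter Topology

section ConvexCover

variable {E : Type*} [AddCommGroup E] [Module ℝ E]

theorem Submodule.setOf_lineMap_mem_subsingleton (p : Submodule ℝ E) {x y : E}
    (h : x ∉ p ∨ y ∉ p) : {t : ℝ | AffineMap.lineMap x y t ∈ p}.Subsingleton := by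
  intro s (hs : AffineMap.lineMap x y s ∈ p) t (ht : AffineMap.lineMap x y t ∈ p)
  by_contra hst
  rw [AffineMap.lineMap_apply_module'] at hs ht
  have hyx : y - x ∈ p := by
    refine (p.smul_mem_iff (sub_ne_zero.2 hst)).1 ?_
    convert p.sub_mem hs ht using 1
    module
  have hx : x ∈ p := (p.add_mem_iff_right (p.smul_mem s hyx)).1 hs
  exact h.elim (· hx) (· (by simpa using p.add_mem hyx hx))

theorem Convex.exists_subset_of_subset_biUnion {ι : Type*} {C : Set E} (hC : Convex ℝ C)
    (hne : C.Nonempty) {s : Finset ι} {p : ι → Submodule ℝ E}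
    (hcov : C ⊆ ⋃ i ∈ s, (p i : Set E)) : ∃ i ∈ s, C ⊆ p i := by
  classical
  induction s using Finset.induction_on with
  | empty => obtain ⟨x, hx⟩ := hne; simpa using hcov hx
  | insert a s _ ih =>
    by_cases hs : C ⊆ ⋃ i ∈ s, (p i : Set E)
    · obtain ⟨i, hi, hCi⟩ := ih hs
      exact ⟨i, Finset.mem_insert_of_mem hi, hCi⟩
    obtain ⟨x, hxC, hxs⟩ := Set.not_subset.1 hs
    refine ⟨a, Finset.mem_insert_self a s, fun y hyC => by_contra fun hya => ?_⟩
    -- The open segment from `x` to `y` is infinite, but meets each `p i` in at most one point.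
    have hsub : ∀ i ∈ insert a s, {t : ℝ | AffineMap.lineMap x y t ∈ p i}.Subsingleton := by
      refine fun i hi => (p i).setOf_lineMap_mem_subsingleton ?_
      rcases Finset.mem_insert.1 hi with rfl | hi
      · exact Or.inr hya
      · exact Or.inl fun hx => hxs (Set.mem_biUnion hi hx)
    refine (Set.Ioo_infinite (zero_lt_one' ℝ)).not_finite
      (((insert a s).finite_toSet.biUnion fun i hi => (hsub i hi).finite).subset ?_)
    intro t ht
    simpa using hcov (hC.lineMap_mem hxC hyC ⟨ht.1.le, ht.2.le⟩)

end ConvexCover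

section InnerProduct

variable {E : Type*} [NormedAddCommGroup E] [InnerProductSpace ℝ E]

theorem exists_smul_eq_of_setOf_inner_subset {v w : E}
    (h : {x | ⟪v, x⟫ = 0} ⊆ {x | ⟪w, x⟫ = 0}) : ∃ c : ℝ, c • v = w := by
  have hle : (ℝ ∙ v)ᗮ ≤ (ℝ ∙ w)ᗮ := fun x hx => by
    simpa [Submodule.mem_orthogonal_singleton_iff_inner_right] using
      h (Submodule.mem_orthogonal_singleton_iff_inner_right.1 hx)
  refine Submodule.mem_span_singleton.1 ?_
  rw [← Submodule.orthogonal_orthogonal (ℝ ∙ v)]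
  exact Submodule.orthogonal_le hle
    (Submodule.le_orthogonal_orthogonal _ (Submodule.mem_span_singleton_self w))

end InnerProduct

section TopologicalVectorSpace

variable {E : Type*} [AddCommGroup E] [Module ℝ E] [TopologicalSpace E] [IsTopologicalAddGroup E]
  [ContinuousSMul ℝ E]

theorem IsOpen.eventually_add_smul_mem {U : Set E} (hU : IsOpen U) {z : E} (hz : z ∈ U) (h : E) :
    ∀ᶠ t : ℝ in 𝓝 0, z + t • h ∈ U :=
  (continuous_const.add (continuous_id.smul continuous_const)).continuousAt.preimage_mem_nhds
    (by simpa using hU.mem_nhds hz)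

theorem Submodule.span_inter_eq_of_inter_subset (p : Submodule ℝ E) {C U : Set E} (hU : IsOpen U)
    {z : E} (hzp : z ∈ p) (hzU : z ∈ U) (hUC : U ∩ p ⊆ C) :
    span ℝ ((p : Set E) ∩ C) = p := by
  refine le_antisymm (span_le.2 Set.inter_subset_left) fun h hh => ?_
  obtain ⟨t, ht0, ht⟩ := (hU.eventually_add_smul_mem hzU h).exists_gt
  have hmem : z + t • h ∈ p := p.add_mem hzp (p.smul_mem t hh)
  have : t • h ∈ span ℝ ((p : Set E) ∩ C) := by
    simpa using sub_mem (subset_span (s := (p : Set E) ∩ C) ⟨hmem, hUC ⟨ht, hmem⟩⟩)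
      (subset_span (s := (p : Set E) ∩ C) ⟨hzp, hUC ⟨hzU, hzp⟩⟩)
  exact (smul_mem_iff _ ht0.ne').1 this

end TopologicalVectorSpace

theorem Nat.card_le_of_standardExample {ι κ β : Type*} [LinearOrder β] [Finite κ]
    (a b : ι → κ → β) (hle : ∀ i j, i ≠ j → a i ≤ b j) (hnle : ∀ i, ¬ a i ≤ b i) :
    Nat.card ι ≤ Nat.card κ := by
  have : ∀ i, ∃ k, b i k < a i k := fun i => by simpa [Pi.le_def] using hnle i
  choose c hc using this
  refine Nat.card_le_card_of_injective c fun i j hij => by_contra fun hne => ?_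
  have hcj : b j (c i) < a j (c i) := hij ▸ hc j
  exact (hc i).not_ge ((hle i j hne (c i)).trans (hcj.le.trans (hle j i (Ne.symm hne) (c i))))

theorem exists_subset_iff_forall_le {α γ : Type*} {A : Set γ} (hA : A.Finite) (T : α → Set γ)
    (hT : ∀ x, T x ⊆ A) :
    ∃ d, ∃ f : α → Fin d → ℝ, ∀ x y, T x ⊆ T y ↔ ∀ i, f x i ≤ f y i := by
  classical
  have := hA.to_subtype
  have e := Finite.equivFin A
  refine ⟨Nat.card A, fun x i => if (e.symm i : γ) ∈ T x then 1 else 0, fun x y => ⟨?_, ?_⟩⟩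
  · intro hxy i
    dsimp only
    split_ifs with h₁ h₂ <;> first | exact absurd (hxy h₁) h₂ | norm_num
  · intro h c hc
    by_contra hcy
    have := h (e ⟨c, hT x hc⟩)
    norm_num [hc, hcy] at this

section Arrangement

local notation:max "ℝ^" n:max => EuclideanSpace ℝ (Fin n)

variable {A S : Set (Set ℝ^n)} {v : Set ℝ^n → ℝ^n} {x₀ x : ℝ^n} {H : Set ℝ^n}

def IsOrientedNormal (A : Set (Set ℝ^n)) (v : Set ℝ^n → ℝ^n) (x₀ : ℝ^n) : Prop :=
  ∀ H ∈ A, H = {x | ⟪v H, x⟫ = 0} ∧ 0 < ⟪v H, x₀⟫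

def signCone (A : Set (Set ℝ^n)) (v : Set ℝ^n → ℝ^n) (x : ℝ^n) : Set ℝ^n :=
  {y | ∀ H ∈ A, 0 < ⟪v H, x⟫ * ⟪v H, y⟫}

def posCone (S : Set (Set ℝ^n)) (v : Set ℝ^n → ℝ^n) : Set ℝ^n :=
  {y | ∀ H ∈ S, 0 < ⟪v H, y⟫}

def nonnegCone (S : Set (Set ℝ^n)) (v : Set ℝ^n → ℝ^n) : Set ℝ^n :=
  {y | ∀ H ∈ S, 0 ≤ ⟪v H, y⟫}

theorem exists_isOrientedNormal (hA : ∀ H ∈ A, IsHyperplane H) (hx₀ : x₀ ∈ arrComplement A) :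
    ∃ v, IsOrientedNormal A v x₀ := by
  have : ∀ H ∈ A, ∃ w : ℝ^n, H = {x | ⟪w, x⟫ = 0} ∧ 0 < ⟪w, x₀⟫ := by
    intro H hH
    obtain ⟨u, -, rfl⟩ := hA H hH
    have hu : ⟪u, x₀⟫ ≠ 0 := fun h => hx₀ (Set.mem_biUnion hH h)
    rcases hu.lt_or_gt with hneg | hpos
    · exact ⟨-u, by simp [inner_neg_left], by simpa [inner_neg_left] using hneg⟩
    · exact ⟨u, rfl, hpos⟩
  choose! v hv using this
  exact ⟨v, hv⟩

namespace IsOrientedNormal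

theorem mem_iff (hv : IsOrientedNormal A v x₀) (hH : H ∈ A) : x ∈ H ↔ ⟪v H, x⟫ = 0 :=
  Set.ext_iff.1 (hv H hH).1 x

theorem eq_orthogonal (hv : IsOrientedNormal A v x₀) (hH : H ∈ A) : H = ((ℝ ∙ v H)ᗮ : Set ℝ^n) := by
  ext x
  rw [hv.mem_iff hH, SetLike.mem_coe, Submodule.mem_orthogonal_singleton_iff_inner_right]

theorem ne_zero (hv : IsOrientedNormal A v x₀) (hH : H ∈ A) : v H ≠ 0 := fun h => by
  simpa [h] using (hv H hH).2

theorem isHyperplane (hv : IsOrientedNormal A v x₀) (hH : H ∈ A) : IsHyperplane H :=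
  ⟨v H, hv.ne_zero hH, (hv H hH).1⟩

theorem mem_arrComplement_iff (hv : IsOrientedNormal A v x₀) :
    x ∈ arrComplement A ↔ ∀ H ∈ A, ⟪v H, x⟫ ≠ 0 := by
  simp only [arrComplement, Set.mem_compl_iff, Set.mem_iUnion, not_exists]
  exact forall₂_congr fun H hH => not_congr (hv.mem_iff hH)

theorem mem_arrComplement (hv : IsOrientedNormal A v x₀) : x₀ ∈ arrComplement A :=
  hv.mem_arrComplement_iff.2 fun H hH => (hv H hH).2.ne'

theorem signCone_eq (hv : IsOrientedNormal A v x₀) : signCone A v x₀ = posCone A v := by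
  ext y
  exact forall₂_congr fun H hH => mul_pos_iff_of_pos_left (hv H hH).2

end IsOrientedNormal

theorem isOpen_posCone (hS : S.Finite) : IsOpen (posCone S v) := by
  simp only [posCone, Set.ofPred_forall]
  exact hS.isOpen_biInter fun H _ => isOpen_lt continuous_const (by fun_prop)

theorem isOpen_signCone (hA : A.Finite) : IsOpen (signCone A v x) := by
  simp only [signCone, Set.ofPred_forall]
  exact hA.isOpen_biInter fun H _ => isOpen_lt continuous_const (by fun_prop)

theorem isClosed_nonnegCone : IsClosed (nonnegCone S v) := by
  simp only [nonnegCone, Set.ofPred_forall]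
  exact isClosed_biInter fun H _ => isClosed_le continuous_const (by fun_prop)

theorem convex_signCone : Convex ℝ (signCone A v x) := by
  simp only [signCone, Set.ofPred_forall]
  exact convex_iInter₂ fun H _ => (convex_Ioi 0).linear_preimage (⟪v H, x⟫ • innerₛₗ ℝ (v H))

theorem convex_nonnegCone : Convex ℝ (nonnegCone S v) := by
  simp only [nonnegCone, Set.ofPred_forall]
  exact convex_iInter₂ fun H _ => (convex_Ici 0).linear_preimage (innerₛₗ ℝ (v H))

theorem nonnegCone_anti {S T : Set (Set ℝ^n)} (h : S ⊆ T) : nonnegCone T v ⊆ nonnegCone S v :=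
  fun _ hy H hH => hy H (h hH)

theorem self_mem_signCone (hv : IsOrientedNormal A v x₀) (hx : x ∈ arrComplement A) :
    x ∈ signCone A v x :=
  fun H hH => mul_self_pos.2 (hv.mem_arrComplement_iff.1 hx H hH)

theorem signCone_subset_arrComplement (hv : IsOrientedNormal A v x₀) :
    signCone A v x ⊆ arrComplement A :=
  fun y hy => hv.mem_arrComplement_iff.2 fun H hH h0 => by simpa [h0] using hy H hH

theorem connectedComponentIn_eq_signCone (hv : IsOrientedNormal A v x₀)
    (hx : x ∈ arrComplement A) : connectedComponentIn (arrComplement A) x = signCone A v x := by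
  refine subset_antisymm (fun y hy H hH => ?_)
    (convex_signCone.isPreconnected.subset_connectedComponentIn (self_mem_signCone hv hx)
      (signCone_subset_arrComplement hv))
  have hsign : ∀ a ∈ connectedComponentIn (arrComplement A) x,
      ∀ b ∈ connectedComponentIn (arrComplement A) x, ⟪v H, a⟫ ≤ 0 → 0 ≤ ⟪v H, b⟫ → False := by
    intro a ha b hb hab hba
    obtain ⟨z, hz, hz0⟩ := isPreconnected_connectedComponentIn.intermediate_value ha hb
      (by fun_prop : Continuous fun z => ⟪v H, z⟫).continuousOn ⟨hab, hba⟩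
    exact hv.mem_arrComplement_iff.1 (connectedComponentIn_subset _ _ hz) H hH hz0
  have hxc := mem_connectedComponentIn hx
  by_contra! hle
  rcases mul_nonpos_iff.1 hle with ⟨h1, h2⟩ | ⟨h1, h2⟩
  · exact hsign y hy x hxc h2 h1
  · exact hsign x hxc y hy h1 h2

theorem isRegion_closure_signCone (hv : IsOrientedNormal A v x₀) (hx : x ∈ arrComplement A) :
    IsRegion A (closure (signCone A v x)) :=
  ⟨x, hx, by rw [connectedComponentIn_eq_signCone hv hx]⟩

theorem interior_closure_signCone (hA : A.Finite) (hv : IsOrientedNormal A v x₀)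
    (hx : x ∈ arrComplement A) : interior (closure (signCone A v x)) = signCone A v x := by
  have hint := (isOpen_signCone (v := v) (x := x) hA).interior_eq
  rw [convex_signCone.interior_closure_eq_interior_of_nonempty_interior
    (by rw [hint]; exact ⟨x, self_mem_signCone hv hx⟩), hint]

theorem closure_signCone_eq_nonnegCone (hv : IsOrientedNormal A v x₀) :
    closure (signCone A v x₀) = nonnegCone A v := by
  rw [hv.signCone_eq]
  refine subset_antisymm (closure_minimal (fun y hy H hH => (hy H hH).le) isClosed_nonnegCone)
    fun y hy => mem_closure_of_tendsto (f := fun t : ℝ => y + t • x₀) (b := 𝓝[>] 0) ?_ ?_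
  · exact ((continuous_const.add (continuous_id.smul continuous_const)).tendsto' 0 y
      (by simp)).mono_left nhdsWithin_le_nhds
  · refine eventually_nhdsWithin_of_forall fun t (ht : 0 < t) H hH => ?_
    rw [inner_add_right, real_inner_smul_right]
    exact add_pos_of_nonneg_of_pos (hy H hH) (mul_pos ht (hv H hH).2)

theorem interior_nonnegCone (hA : A.Finite) (hv : IsOrientedNormal A v x₀) :
    interior (nonnegCone A v) = posCone A v := by
  rw [← closure_signCone_eq_nonnegCone hv, interior_closure_signCone hA hv hv.mem_arrComplement,
    hv.signCone_eq]

theorem sepSet_closure_signCone (hA : A.Finite) (hv : IsOrientedNormal A v x₀)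
    (hx : x ∈ arrComplement A) :
    sepSet A (nonnegCone A v) (closure (signCone A v x)) = {H | H ∈ A ∧ ⟪v H, x⟫ < 0} := by
  ext H
  simp only [sepSet, Separates, interior_nonnegCone hA hv, interior_closure_signCone hA hv hx,
    Set.mem_ofPred_eq]
  refine and_congr_right fun hH => ⟨?_, fun hneg => ?_⟩
  · rintro ⟨w, -, hwH, hpos, hneg⟩
    obtain ⟨c, rfl⟩ := exists_smul_eq_of_setOf_inner_subset ((hv H hH).1.symm.trans hwH).subset
    have h₀ := hneg x₀ fun G hG => (hv G hG).2
    have h₁ := hpos x (self_mem_signCone hv hx)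
    rw [real_inner_smul_left] at h₀ h₁
    exact neg_of_mul_pos_right h₁ (neg_of_mul_neg_left h₀ (hv H hH).2.le).le
  · refine ⟨-v H, neg_ne_zero.2 (hv.ne_zero hH), ?_, fun y hy => ?_, fun y hy => ?_⟩
    · ext y
      simp [hv.mem_iff hH, inner_neg_left]
    · rw [inner_neg_left, neg_pos]
      exact neg_of_mul_pos_right (hy H hH) hneg.le
    · rw [inner_neg_left, neg_lt_zero]
      exact hy H hH

theorem IsHyperplane.eq_of_subset {G : Set ℝ^n} (hH : IsHyperplane H) (hG : IsHyperplane G)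
    (h : H ⊆ G) : H = G := by
  obtain ⟨v, -, rfl⟩ := hH
  obtain ⟨w, hw, rfl⟩ := hG
  obtain ⟨c, rfl⟩ := exists_smul_eq_of_setOf_inner_subset h
  have hc : c ≠ 0 := by rintro rfl; simp at hw
  ext x
  simp [real_inner_smul_left, hc]

theorem exists_forall_pos_of_mem_facetHyperplanes (hA : A.Finite) (hv : IsOrientedNormal A v x₀)
    (hH : H ∈ facetHyperplanes A (nonnegCone A v)) :
    ∃ z ∈ H, ∀ G ∈ A, G ≠ H → 0 < ⟪v G, z⟫ := by
  obtain ⟨hHA, hspan⟩ := hH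
  by_contra! hcon
  -- Otherwise the convex set `H ∩ B` is covered by the other hyperplanes, so lies in one of them.
  have hcov : H ∩ nonnegCone A v ⊆
      ⋃ G ∈ (hA.sdiff (t := {H})).toFinset, ((ℝ ∙ v G)ᗮ : Set ℝ^n) := by
    rintro z ⟨hzH, hzB⟩
    obtain ⟨G, hG, hne, hle⟩ := hcon z hzH
    simp only [Set.mem_iUnion, Set.Finite.mem_toFinset, SetLike.mem_coe,
      Submodule.mem_orthogonal_singleton_iff_inner_right]
    exact ⟨G, ⟨hG, hne⟩, le_antisymm hle (hzB G hG)⟩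
  have hconv : Convex ℝ (H ∩ nonnegCone A v) := by
    rw [hv.eq_orthogonal hHA]
    exact (Submodule.convex _).inter convex_nonnegCone
  obtain ⟨G, hG, hsub⟩ := hconv.exists_subset_of_subset_biUnion
    ⟨0, by simp [hv.mem_iff hHA], fun G _ => by simp⟩ hcov
  rw [Set.Finite.mem_toFinset] at hG
  have hHG : H ⊆ G := fun y hy => by
    have := Submodule.span_le.2 hsub (hspan ▸ Submodule.subset_span hy)
    rwa [hv.eq_orthogonal hG.1]
  exact hG.2 (IsHyperplane.eq_of_subset (hv.isHyperplane hHA) (hv.isHyperplane hG.1) hHG).symm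

theorem exists_neg_forall_pos_of_mem_facetHyperplanes (hA : A.Finite)
    (hv : IsOrientedNormal A v x₀) (hH : H ∈ facetHyperplanes A (nonnegCone A v)) :
    ∃ p, ⟪v H, p⟫ < 0 ∧ ∀ G ∈ A, G ≠ H → 0 < ⟪v G, p⟫ := by
  obtain ⟨z, hzH, hz⟩ := exists_forall_pos_of_mem_facetHyperplanes hA hv hH
  obtain ⟨t, ht, htU⟩ := ((isOpen_posCone (hA.sdiff (t := {H}))).eventually_add_smul_mem
    (fun G hG => hz G hG.1 hG.2) (v H)).exists_lt
  refine ⟨z + t • v H, ?_, fun G hG hne => htU G ⟨hG, hne⟩⟩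
  rw [inner_add_right, real_inner_smul_right, (hv.mem_iff hH.1).1 hzH, zero_add]
  exact mul_neg_of_neg_of_pos ht (real_inner_self_pos.2 (hv.ne_zero hH.1))

theorem mem_facetHyperplanes_of_nonnegCone_sdiff_ne (hS : S.Finite) (hSA : S ⊆ A)
    (hv : IsOrientedNormal A v x₀) (hSB : nonnegCone S v = nonnegCone A v) (hH : H ∈ S)
    (hirr : nonnegCone (S \ {H}) v ≠ nonnegCone A v) :
    H ∈ facetHyperplanes A (nonnegCone A v) := by
  have hHA := hSA hH
  obtain ⟨y, hyS, hyB⟩ : ∃ y ∈ nonnegCone (S \ {H}) v, y ∉ nonnegCone A v := by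
    by_contra! h
    exact hirr (Set.Subset.antisymm h (hSB ▸ nonnegCone_anti Set.sdiff_subset))
  have hyH : ⟪v H, y⟫ < 0 := by
    by_contra! h0
    refine hyB (hSB ▸ fun G hG => ?_)
    by_cases hGH : G = H
    · exact hGH ▸ h0
    · exact hyS G ⟨hG, hGH⟩
  -- The segment from `x₀` to `y` crosses `H` at `z`, strictly inside the other walls of `S`.
  set z := (-⟪v H, y⟫) • x₀ + ⟪v H, x₀⟫ • y
  have hzH : z ∈ (ℝ ∙ v H)ᗮ := by
    rw [Submodule.mem_orthogonal_singleton_iff_inner_right, inner_add_right,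
      real_inner_smul_right, real_inner_smul_right]
    ring
  have hz : z ∈ posCone (S \ {H}) v := fun G hG => by
    rw [inner_add_right, real_inner_smul_right, real_inner_smul_right]
    exact add_pos_of_pos_of_nonneg (mul_pos (neg_pos.2 hyH) (hv G (hSA hG.1)).2)
      (mul_nonneg (hv H hHA).2.le (hyS G hG))
  refine ⟨hHA, ?_⟩
  rw [hv.eq_orthogonal hHA, Submodule.span_eq]
  refine Submodule.span_inter_eq_of_inter_subset _ (isOpen_posCone hS.sdiff) hzH hz ?_
  rintro u ⟨huS, huH⟩
  rw [← hSB]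
  intro G hG
  by_cases hGH : G = H
  · exact hGH ▸ (Submodule.mem_orthogonal_singleton_iff_inner_right.1 huH).ge
  · exact (huS G ⟨hG, hGH⟩).le

theorem nonnegCone_facetHyperplanes (hA : A.Finite) (hv : IsOrientedNormal A v x₀) :
    nonnegCone (facetHyperplanes A (nonnegCone A v)) v = nonnegCone A v := by
  obtain ⟨S, ⟨hSA, hSB⟩, hmin⟩ := Set.Finite.exists_minimal
    (s := {S | S ⊆ A ∧ nonnegCone S v = nonnegCone A v})
    (hA.finite_subsets.subset fun S hS => hS.1) ⟨A, subset_rfl, rfl⟩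
  have hSF : S ⊆ facetHyperplanes A (nonnegCone A v) := fun H hH =>
    mem_facetHyperplanes_of_nonnegCone_sdiff_ne (hA.subset hSA) hSA hv hSB hH fun h =>
      (hmin ⟨Set.sdiff_subset.trans hSA, h⟩ Set.sdiff_subset hH).2 rfl
  exact ((nonnegCone_anti hSF).trans hSB.le).antisymm (nonnegCone_anti fun H hH => hH.1)

theorem sInter_facetHyperplanes_subset (hA : A.Finite) (hv : IsOrientedNormal A v x₀) :
    ⋂₀ facetHyperplanes A (nonnegCone A v) ⊆ ⋂₀ A := by
  intro x hx H hH
  have hB : ∀ y, (∀ G ∈ facetHyperplanes A (nonnegCone A v), ⟪v G, y⟫ = 0) →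
      y ∈ nonnegCone A v := fun y hy =>
    nonnegCone_facetHyperplanes hA hv ▸ fun G hG => (hy G hG).ge
  have h0 : ∀ G ∈ facetHyperplanes A (nonnegCone A v), ⟪v G, x⟫ = 0 :=
    fun G hG => (hv.mem_iff hG.1).1 (hx G hG)
  rw [hv.mem_iff hH]
  refine le_antisymm ?_ (hB x h0 H hH)
  simpa [inner_neg_right] using hB (-x) (fun G hG => by simp [inner_neg_right, h0 G hG]) H hH

theorem exists_sepSet_eq_singleton_and_sdiff (hA : A.Finite) (hv : IsOrientedNormal A v x₀)
    (hH : H ∈ facetHyperplanes A (nonnegCone A v)) :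
    ∃ R₁ R₂, IsRegion A R₁ ∧ IsRegion A R₂ ∧ sepSet A (nonnegCone A v) R₁ = {H} ∧
      sepSet A (nonnegCone A v) R₂ = A \ {H} := by
  obtain ⟨p, hpH, hpG⟩ := exists_neg_forall_pos_of_mem_facetHyperplanes hA hv hH
  have hp : p ∈ arrComplement A := hv.mem_arrComplement_iff.2 fun G hG => by
    by_cases hGH : G = H
    · exact hGH ▸ hpH.ne
    · exact (hpG G hG hGH).ne'
  have hnp : -p ∈ arrComplement A := hv.mem_arrComplement_iff.2 fun G hG => by
    simpa [inner_neg_right] using hv.mem_arrComplement_iff.1 hp G hG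
  refine ⟨_, _, isRegion_closure_signCone hv hp, isRegion_closure_signCone hv hnp, ?_, ?_⟩
  · rw [sepSet_closure_signCone hA hv hp]
    ext G
    refine ⟨fun ⟨hG, hneg⟩ => by_contra fun hGH => (hpG G hG hGH).not_gt hneg, ?_⟩
    rintro rfl
    exact ⟨hH.1, hpH⟩
  · rw [sepSet_closure_signCone hA hv hnp]
    ext G
    simp only [inner_neg_right, neg_lt_zero, Set.mem_sdiff, Set.mem_singleton_iff,
      Set.mem_ofPred_eq]
    exact and_congr_right fun hG => ⟨fun hpos hGH => (hGH ▸ hpH).not_gt hpos, hpG G hG⟩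

theorem ncard_facetHyperplanes_le_regionOrderDim (hA : A.Finite) (hv : IsOrientedNormal A v x₀) :
    (facetHyperplanes A (nonnegCone A v)).ncard ≤ regionOrderDim A (nonnegCone A v) := by
  set F := facetHyperplanes A (nonnegCone A v)
  refine le_csInf (exists_subset_iff_forall_le hA
    (fun R : {R // IsRegion A R} => sepSet A (nonnegCone A v) R.1) fun R H hH => hH.1) ?_
  rintro d ⟨f, hf⟩
  choose R₁ R₂ hR₁ hR₂ hS₁ hS₂ using fun H : F => exists_sepSet_eq_singleton_and_sdiff hA hv H.2
  have hle : ∀ G H : F, (∀ i, f ⟨R₁ G, hR₁ G⟩ i ≤ f ⟨R₂ H, hR₂ H⟩ i) ↔ G ≠ H := fun G H => by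
    rw [← hf]
    simp [regLE, hS₁, hS₂, G.2.1, Subtype.ext_iff]
  calc F.ncard = Nat.card F := (Nat.card_coe_set_eq F).symm
    _ ≤ Nat.card (Fin d) := Nat.card_le_of_standardExample (fun H => f ⟨R₁ H, hR₁ H⟩)
        (fun H => f ⟨R₂ H, hR₂ H⟩) (fun G H hne => (hle G H).2 hne) (fun H h => (hle H H).1 h rfl)
    _ = d := Nat.card_fin d

theorem arrRank_le_of_sInter_subset {A A' : Set (Set ℝ^n)} (h : ⋂₀ A' ⊆ ⋂₀ A) :
    arrRank A ≤ arrRank A' :=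
  Submodule.finrank_mono (Submodule.orthogonal_le (Submodule.span_mono h))

theorem arrRank_le_ncard (hA : A.Finite) (hhyp : ∀ H ∈ A, IsHyperplane H) :
    arrRank A ≤ A.ncard := by
  choose! w hw using fun H hH => (hhyp H hH).imp fun _ h => h.2
  have hle : (Submodule.span ℝ (⋂₀ A))ᗮ ≤ Submodule.span ℝ (w '' A) := by
    rw [← Submodule.orthogonal_orthogonal (Submodule.span ℝ (w '' A))]
    refine Submodule.orthogonal_le fun x hx => Submodule.subset_span fun H hH => ?_
    rw [hw H hH]
    exact Submodule.inner_right_of_mem_orthogonal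
      (Submodule.subset_span (s := w '' A) ⟨H, hH, rfl⟩) hx
  have := (hA.image w).fintype
  calc arrRank A ≤ Module.finrank ℝ (Submodule.span ℝ (w '' A)) := Submodule.finrank_mono hle
    _ ≤ (w '' A).ncard := (finrank_span_le_card _).trans_eq (Set.ncard_eq_toFinset_card' _).symm
    _ ≤ A.ncard := Set.ncard_image_le hA

end Arrangement

/-- **Proposition (Reading, Proposition 7).** The order dimension of 𝒫(𝒜,B) is at least the
number of facets of `B`, which is at least the rank of `A`. -/
theorem facets_le_orderDim_and_rank_le_facets {n : ℕ}
    (A : Set (Set (EuclideanSpace ℝ (Fin n)))) (B : Set (EuclideanSpace ℝ (Fin n)))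
    (hA : IsCentralArrangement A) (hB : IsRegion A B) :
    (facetHyperplanes A B).ncard ≤ regionOrderDim A B ∧
      arrRank A ≤ (facetHyperplanes A B).ncard := by
  obtain ⟨hfin, -, hhyp⟩ := hA
  obtain ⟨x₀, hx₀, rfl⟩ := hB
  obtain ⟨v, hv⟩ := exists_isOrientedNormal hhyp hx₀
  rw [connectedComponentIn_eq_signCone hv hx₀, closure_signCone_eq_nonnegCone hv]
  exact ⟨ncard_facetHyperplanes_le_regionOrderDim hfin hv,
    (arrRank_le_of_sInter_subset (sInter_facetHyperplanes_subset hfin hv)).trans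
      (arrRank_le_ncard (hfin.subset fun H hH => hH.1) fun H hH => hhyp H hH.1)⟩
end
end

section
/- Let 𝒜 be a central hyperplane arrangement in ℝⁿ with base region B, and let 𝒜′ be a rank-two subarrangement of 𝒜. If H₁ and H₂ are basic in 𝒜′ and H ∈ 𝒜′ is not basic in 𝒜′, then H ∩ B = H₁ ∩ H₂ ∩ B. -/
open scoped RealInnerProductSpace

noncomputable section

variable {n : ℕ}

/-- `A'` is a rank-two subarrangement of `A`: a subset of cardinality greater than one
consisting of all the hyperplanes of `A` containing some fixed codimension-two subspace. -/
def IsRankTwoSub (A A' : Set (Set (EuclideanSpace ℝ (Fin n)))) : Prop :=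
  1 < A'.ncard ∧ ∃ L : Submodule ℝ (EuclideanSpace ℝ (Fin n)),
    Module.finrank ℝ L = n - 2 ∧ A' = {H | H ∈ A ∧ (L : Set (EuclideanSpace ℝ (Fin n))) ⊆ H}

/-!
Every hyperplane of `A'` contains the codimension-two subspace `L`, so `L` lies in the closure
of every region of `A'`, in particular in the region `B'` of `A'` containing `B`. If `H` is not
basic, the span of `H ∩ B'` is a proper subspace of `H` containing `L`, hence equal to `L`; so
`H ∩ B ⊆ L`. Finally two distinct hyperplanes `H₁`, `H₂` of `A'` intersect exactly in `L`.
-/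

namespace Submodule

variable {𝕜 V : Type*} [DivisionRing 𝕜] [AddCommGroup V] [Module 𝕜 V]

lemma eq_of_lt_of_le_of_finrank_le_add_one {L M K : Submodule 𝕜 V} [FiniteDimensional 𝕜 K]
    (hLM : L < M) (hMK : M ≤ K) (hrank : Module.finrank 𝕜 K ≤ Module.finrank 𝕜 L + 1) :
    M = K := by
  have : FiniteDimensional 𝕜 M := finiteDimensional_of_le hMK
  have hlt := finrank_lt_finrank_of_lt hLM
  exact eq_of_le_of_finrank_le hMK (by omega)

lemma eq_inf_of_ne_of_finrank_le_add_one {L K₁ K₂ : Submodule 𝕜 V}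
    [FiniteDimensional 𝕜 K₁] [FiniteDimensional 𝕜 K₂] (h₁ : L ≤ K₁) (h₂ : L ≤ K₂)
    (hne : K₁ ≠ K₂) (hrank₁₂ : Module.finrank 𝕜 K₁ = Module.finrank 𝕜 K₂)
    (hrank : Module.finrank 𝕜 K₁ ≤ Module.finrank 𝕜 L + 1) : L = K₁ ⊓ K₂ := by
  by_contra hL
  have hinf : K₁ ⊓ K₂ = K₁ :=
    eq_of_lt_of_le_of_finrank_le_add_one ((le_inf h₁ h₂).lt_of_ne hL) inf_le_left hrank
  exact hne (eq_of_le_of_finrank_eq (hinf ▸ inf_le_right) hrank₁₂)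

lemma subset_of_span_ne_of_finrank_le_add_one {L K : Submodule 𝕜 V} [FiniteDimensional 𝕜 K]
    {S : Set V} (hL : (L : Set V) ⊆ S) (hS : S ⊆ K)
    (hrank : Module.finrank 𝕜 K ≤ Module.finrank 𝕜 L + 1)
    (hne : span 𝕜 S ≠ K) : S ⊆ L := by
  intro x hx
  by_contra hxL
  have hLS : L < span 𝕜 S :=
    lt_of_le_of_ne (fun y hy => subset_span (hL hy)) fun h => hxL (h ▸ subset_span hx)
  exact hne (eq_of_lt_of_le_of_finrank_le_add_one hLS (span_le.2 hS) hrank)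

end Submodule

lemma IsHyperplane.exists_submodule {H : Set (EuclideanSpace ℝ (Fin n))} (hH : IsHyperplane H) :
    ∃ K : Submodule ℝ (EuclideanSpace ℝ (Fin n)),
      (K : Set (EuclideanSpace ℝ (Fin n))) = H ∧ Module.finrank ℝ K + 1 = n := by
  obtain ⟨v, hv, rfl⟩ := hH
  refine ⟨(ℝ ∙ v)ᗮ, ?_, ?_⟩
  · ext x
    exact Submodule.mem_orthogonal_singleton_iff_inner_right
  · have := (ℝ ∙ v).finrank_add_finrank_orthogonal
    rw [finrank_span_singleton hv, finrank_euclideanSpace_fin] at this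
    omega

lemma arrComplement_anti_s3 {A A' : Set (Set (EuclideanSpace ℝ (Fin n)))} (h : A' ⊆ A) :
    arrComplement A ⊆ arrComplement A' :=
  Set.compl_subset_compl.mpr (Set.biUnion_subset_biUnion_left h)

lemma IsRegion.exists_superset {A A' : Set (Set (EuclideanSpace ℝ (Fin n)))}
    {B : Set (EuclideanSpace ℝ (Fin n))} (hB : IsRegion A B) (h : A' ⊆ A) :
    ∃ B', IsRegion A' B' ∧ B ⊆ B' := by
  obtain ⟨x₀, hx₀, rfl⟩ := hB
  exact ⟨_, ⟨x₀, arrComplement_anti_s3 h hx₀, rfl⟩,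
    closure_mono (connectedComponentIn_mono x₀ (arrComplement_anti_s3 h))⟩

lemma IsRegion.coe_subset {A : Set (Set (EuclideanSpace ℝ (Fin n)))}
    {R : Set (EuclideanSpace ℝ (Fin n))} (hR : IsRegion A R) (hA : ∀ H ∈ A, IsHyperplane H)
    {L : Submodule ℝ (EuclideanSpace ℝ (Fin n))}
    (hL : ∀ H ∈ A, (L : Set (EuclideanSpace ℝ (Fin n))) ⊆ H) :
    (L : Set (EuclideanSpace ℝ (Fin n))) ⊆ R := by
  obtain ⟨x₀, hx₀, rfl⟩ := hR
  set f : EuclideanSpace ℝ (Fin n) × ℝ → EuclideanSpace ℝ (Fin n) := fun p => p.1 + p.2 • x₀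
  have hf : Continuous f := by fun_prop
  -- on `y + t • x₀` with `y ∈ L`, each normal vector `v` takes the value `t * ⟪v, x₀⟫ ≠ 0`
  have hcone : f '' ((L : Set _) ×ˢ Set.Ioi 0) ⊆ arrComplement A := by
    rintro _ ⟨⟨y, t⟩, ⟨hy, ht⟩, rfl⟩
    simp only [arrComplement, Set.mem_compl_iff, Set.mem_iUnion₂, not_exists]
    intro H hHA hyH
    obtain ⟨v, -, rfl⟩ := hA H hHA
    have hvx₀ : ⟪v, x₀⟫ ≠ 0 := fun h0 => hx₀ (Set.mem_biUnion hHA h0)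
    have hvy : ⟪v, y⟫ = 0 := hL _ hHA hy
    have : ⟪v, y + t • x₀⟫ = t * ⟪v, x₀⟫ := by
      rw [inner_add_right, real_inner_smul_right, hvy, zero_add]
    exact mul_ne_zero (ne_of_gt ht) hvx₀ (this ▸ hyH)
  have hconn : f '' ((L : Set _) ×ˢ Set.Ioi 0) ⊆ connectedComponentIn (arrComplement A) x₀ :=
    ((L.convex.isPreconnected.prod isPreconnected_Ioi).image f hf.continuousOn)
      |>.subset_connectedComponentIn
        ⟨(0, 1), ⟨L.zero_mem, Set.mem_Ioi.2 one_pos⟩, by simp [f]⟩ hcone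
  intro z hz
  refine closure_mono hconn (image_closure_subset_closure_image hf ⟨(z, 0), ?_, by simp [f]⟩)
  rw [closure_prod_eq, closure_Ioi]
  exact ⟨subset_closure hz, Set.mem_Ici.2 le_rfl⟩

/-- **Lemma (Reading, Lemma 3).** If `H₁` and `H₂` are (the two) basic hyperplanes in the
rank-two subarrangement `A'` and `H ∈ A'` is not basic, then `H ∩ B = H₁ ∩ H₂ ∩ B`. -/
theorem basic_containment {n : ℕ}
    (A : Set (Set (EuclideanSpace ℝ (Fin n)))) (B : Set (EuclideanSpace ℝ (Fin n)))
    (hA : IsCentralArrangement A) (hB : IsRegion A B)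
    (A' : Set (Set (EuclideanSpace ℝ (Fin n)))) (hA' : IsRankTwoSub A A')
    (H₁ H₂ H : Set (EuclideanSpace ℝ (Fin n)))
    (h₁ : IsBasicIn A' B H₁) (h₂ : IsBasicIn A' B H₂) (h₁₂ : H₁ ≠ H₂)
    (hH : H ∈ A') (hHnb : ¬ IsBasicIn A' B H) :
    H ∩ B = H₁ ∩ H₂ ∩ B := by
  obtain ⟨-, -, hhyp⟩ := hA
  obtain ⟨-, L, hL, rfl⟩ := hA'
  obtain ⟨B', hB', hBB'⟩ := hB.exists_superset (Set.sep_subset _ _)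
  have hLB' : (L : Set _) ⊆ B' := hB'.coe_subset (fun K hK => hhyp K hK.1) fun K hK => hK.2
  obtain ⟨K, rfl, hK⟩ := (hhyp H hH.1).exists_submodule
  obtain ⟨K₁, rfl, hK₁⟩ := (hhyp H₁ h₁.1.1).exists_submodule
  obtain ⟨K₂, rfl, hK₂⟩ := (hhyp H₂ h₂.1.1).exists_submodule
  have hKB' : (K : Set _) ∩ B' ⊆ L :=
    Submodule.subset_of_span_ne_of_finrank_le_add_one
      (Set.subset_inter hH.2 hLB') Set.inter_subset_left (by omega)
      fun hspan => hHnb ⟨hH, B', hB', hBB', by rw [hspan, Submodule.span_eq]⟩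
  have hL₁₂ : (L : Set (EuclideanSpace ℝ (Fin n))) = ↑K₁ ∩ ↑K₂ := by
    rw [Submodule.eq_inf_of_ne_of_finrank_le_add_one h₁.1.2 h₂.1.2 (fun h => h₁₂ (congrArg _ h))
      (by omega) (by omega), Submodule.coe_inf]
  ext x
  constructor
  · rintro ⟨hxK, hxB⟩
    exact ⟨hL₁₂ ▸ hKB' ⟨hxK, hBB' hxB⟩, hxB⟩
  · rintro ⟨hx₁₂, hxB⟩
    exact ⟨hH.2 (hL₁₂ ▸ hx₁₂), hxB⟩
end
end

section
/- The order dimension of a finite poset P is equal to the smallest d such that there exist order-preserving maps η₁,…,η_d : P → ℕ with the property that for every subcritical pair (j,m) of P there is some i with η_i(m) < η_i(j). -/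
/-- `(j, m)` is a subcritical pair in the poset `P`: `j ≰ m`, everything strictly below `j`
is below `m`, and everything strictly above `m` is above `j`. -/
def Subcritical {P : Type*} [PartialOrder P] (j m : P) : Prop :=
  ¬ j ≤ m ∧ (∀ x, x < j → x ≤ m) ∧ (∀ x, m < x → j ≤ x)

/-- The order dimension of a poset `P`: the smallest `d` such that `P` embeds as an induced
subposet of ℝᵈ with the componentwise order. -/
noncomputable def orderDim (P : Type*) [PartialOrder P] : ℕ :=
  sInf {d : ℕ | ∃ f : P → (Fin d → ℝ), ∀ x y : P, x ≤ y ↔ ∀ i, f x i ≤ f y i}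

/-! A family of monotone maps reversing every subcritical pair already detects every
non-comparability `x ≰ y`: take `j` minimal among the elements below `x` but not below `y`,
then `m` maximal among the elements above `y` but not above `j`; `(j, m)` is subcritical and
any map reversing it reverses `(x, y)`. Conversely each coordinate of an embedding into `ℝᵈ`
becomes a monotone map into `ℕ`, with the same strict inequalities, after replacing a value by
its rank among the finitely many values taken. -/

open Finset

section Subcritical

variable {P : Type*} [PartialOrder P]

theorem exists_subcritical_of_not_le [WellFoundedLT P] [WellFoundedGT P] {x y : P}
    (h : ¬ x ≤ y) : ∃ j m : P, Subcritical j m ∧ j ≤ x ∧ y ≤ m := by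
  obtain ⟨j, ⟨hjx, hjy⟩, hj_min⟩ :=
    wellFounded_lt.has_min {w | w ≤ x ∧ ¬ w ≤ y} ⟨x, le_rfl, h⟩
  obtain ⟨m, ⟨hym, hjm⟩, hm_max⟩ :=
    wellFounded_gt.has_min {w | y ≤ w ∧ ¬ j ≤ w} ⟨y, le_rfl, hjy⟩
  refine ⟨j, m, ⟨hjm, fun z hzj => ?_, fun z hmz => ?_⟩, hjx, hym⟩
  · have hzy : z ≤ y := by_contra fun hzy => hj_min z ⟨hzj.le.trans hjx, hzy⟩ hzj
    exact hzy.trans hym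
  · exact by_contra fun hjz => hm_max z ⟨hym.trans hmz.le, hjz⟩ hmz

theorem le_iff_forall_le_of_reverses_subcritical [WellFoundedLT P] [WellFoundedGT P]
    {ι α : Type*} [Preorder α] {η : ι → P → α} (hmono : ∀ i, Monotone (η i))
    (hrev : ∀ j m : P, Subcritical j m → ∃ i, η i m < η i j) (x y : P) :
    x ≤ y ↔ ∀ i, η i x ≤ η i y := by
  refine ⟨fun hxy i => hmono i hxy, fun hle => by_contra fun hxy => ?_⟩
  obtain ⟨j, m, hjm, hjx, hym⟩ := exists_subcritical_of_not_le hxy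
  obtain ⟨i, hi⟩ := hrev j m hjm
  exact (hi.trans_le ((hmono i hjx).trans ((hle i).trans (hmono i hym)))).false

end Subcritical

section Rank

variable {P α : Type*} [Fintype P] [LinearOrder α]

def rankBy (g : P → α) (x : P) : ℕ := #{z | g z ≤ g x}

theorem rankBy_le_rankBy {g : P → α} {x y : P} (h : g x ≤ g y) : rankBy g x ≤ rankBy g y :=
  card_le_card <| monotone_filter_right _ fun _ _ hz => hz.trans h

theorem rankBy_lt_rankBy {g : P → α} {x y : P} (h : g x < g y) : rankBy g x < rankBy g y := by
  refine card_lt_card <| (ssubset_iff_of_subset <| monotone_filter_right _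
    fun _ _ hz => hz.trans h.le).2 ⟨y, ?_, ?_⟩ <;> simp [h]

variable {ι : Type*} {Q : Type*} [PartialOrder Q] [Fintype Q] {f : Q → ι → α}

theorem monotone_rankBy_of_le_iff (hf : ∀ x y, x ≤ y ↔ ∀ i, f x i ≤ f y i) (i : ι) :
    Monotone (rankBy (f · i)) :=
  fun x y hxy => rankBy_le_rankBy ((hf x y).1 hxy i)

theorem exists_rankBy_lt_of_le_iff (hf : ∀ x y, x ≤ y ↔ ∀ i, f x i ≤ f y i) {j m : Q}
    (h : ¬ j ≤ m) : ∃ i, rankBy (f · i) m < rankBy (f · i) j := by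
  obtain ⟨i, hi⟩ := not_forall.1 (mt (hf j m).2 h)
  exact ⟨i, rankBy_lt_rankBy (lt_of_not_ge hi)⟩

end Rank

/-- **Proposition (Reading, Proposition 11).** The order dimension of a finite poset `P` is
the smallest `d` such that there exist order-preserving maps `η₁, …, η_d : P → ℕ` such that
every subcritical pair `(j,m)` of `P` is reversed by some `η_i`. -/
theorem orderDim_eq_subcritical_reversing_maps
    (P : Type*) [PartialOrder P] [Fintype P] :
    orderDim P = sInf {d : ℕ | ∃ η : Fin d → P → ℕ,
      (∀ i, Monotone (η i)) ∧
      ∀ j m : P, Subcritical j m → ∃ i, η i m < η i j} := by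
  unfold orderDim
  congr 1
  ext d
  constructor
  · rintro ⟨f, hf⟩
    exact ⟨fun i => rankBy (f · i), monotone_rankBy_of_le_iff hf,
      fun j m hjm => exists_rankBy_lt_of_le_iff hf hjm.1⟩
  · rintro ⟨η, hmono, hrev⟩
    refine ⟨fun x i => (η i x : ℝ), fun x y => ?_⟩
    simpa only [Nat.cast_le] using le_iff_forall_le_of_reverses_subcritical hmono hrev x y
end

section
/- For every n ≥ 2, the order dimension of the weak order on the symmetric group Sₙ equals n − 1. -/
/-! Write `I_j(π) = {a < j | π j < π a}` for column `j` of the inversion set. Then `π ≤ σ` iff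
`I_j(π) ≤ I_j(σ)` in colex for every `j`: if `(i, j) ∈ Inv π \ Inv σ` with `j` minimal, every
`a ∈ I_j(σ) \ I_j(π)` satisfies `a < i`, since otherwise `(i, a)` would be a smaller such pair.
Column `0` is empty and colex on subsets of `Fin n` is read off `∑ 2 ^ a`, so the `n - 1` columns
`j ≥ 1` embed the weak order in `ℝⁿ⁻¹`. Conversely, the adjacent transpositions `sₘ` and the
products `w₀ sₘ` satisfy `sₘ ≰ w₀ sₘ` and `sₘ ≤ w₀ sₗ` for `l ≠ m`, a standard example of size
`n - 1`, and no coordinate can witness two of the failures `sₘ ≰ w₀ sₘ`. -/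

/-- The inversion set of a permutation of `Fin n`. -/
def invSet {n : ℕ} (π : Equiv.Perm (Fin n)) : Set (Fin n × Fin n) :=
  {p | p.1 < p.2 ∧ π p.2 < π p.1}

/-- The weak order on the symmetric group: containment of inversion sets. -/
def weakLE {n : ℕ} (π σ : Equiv.Perm (Fin n)) : Prop :=
  invSet π ⊆ invSet σ

open Finset Colex

theorem card_le_card_of_standardExample {ι κ α β : Type*} [Fintype ι] [Fintype κ]
    [LinearOrder β] (f : α → κ → β) (a b : ι → α) (hab : ∀ m, ¬ f (a m) ≤ f (b m))
    (hab' : ∀ m l, m ≠ l → f (a m) ≤ f (b l)) : Fintype.card ι ≤ Fintype.card κ := by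
  have hsep : ∀ m, ∃ i, f (b m) i < f (a m) i := fun m => by
    simpa [Pi.le_def] using hab m
  choose c hc using hsep
  refine Fintype.card_le_of_injective c fun m l hml => by_contra fun hne => ?_
  have hl := hc l
  rw [← hml] at hl
  exact lt_irrefl _ (((hc m).trans_le (hab' m l hne (c m))).trans
    (hl.trans_le (hab' l m (Ne.symm hne) (c m))))

lemma Fin.geomSum_le_geomSum_iff_toColex_le_toColex {n b : ℕ} (hb : 2 ≤ b)
    {s t : Finset (Fin n)} :
    ∑ a ∈ s, b ^ (a : ℕ) ≤ ∑ a ∈ t, b ^ (a : ℕ) ↔ toColex s ≤ toColex t := by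
  rw [← toColex_image_le_toColex_image Fin.val_strictMono,
    ← Finset.geomSum_le_geomSum_iff_toColex_le_toColex hb, sum_image Fin.val_injective.injOn,
    sum_image Fin.val_injective.injOn]

section InversionSets

variable {n : ℕ}

lemma invSet_revPerm_mul (π : Equiv.Perm (Fin n)) :
    invSet (Fin.revPerm * π) = {p | p.1 < p.2} \ invSet π := by
  ext ⟨i, j⟩
  simp only [invSet, Equiv.Perm.mul_apply, Fin.revPerm_apply, Fin.rev_lt_rev, Set.mem_sdiff,
    Set.mem_ofPred_eq, not_and, not_lt]
  exact and_congr_right fun hij => by rw [imp_iff_right hij, (π.injective.ne hij.ne).le_iff_lt]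

lemma invSet_swap_castSucc_succ {k : ℕ} (m : Fin k) :
    invSet (Equiv.swap m.castSucc m.succ) = {(m.castSucc, m.succ)} := by
  ext ⟨i, j⟩
  simp only [invSet, Set.mem_ofPred_eq, Set.mem_singleton_iff, Prod.mk.injEq]
  constructor
  · rintro ⟨hij, hinv⟩
    rw [Equiv.swap_apply_def, Equiv.swap_apply_def] at hinv
    simp only [Fin.ext_iff, Fin.lt_def, Fin.val_castSucc, Fin.val_succ] at *
    split_ifs at hinv <;> simp_all <;> omega
  · rintro ⟨rfl, rfl⟩
    simp

def invCol (π : Equiv.Perm (Fin n)) (j : Fin n) : Finset (Fin n) :=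
  {a | a < j ∧ π j < π a}

lemma mem_invCol {π : Equiv.Perm (Fin n)} {a j : Fin n} : a ∈ invCol π j ↔ (a, j) ∈ invSet π := by
  simp [invCol, invSet]

lemma invCol_zero {k : ℕ} (π : Equiv.Perm (Fin (k + 1))) : invCol π 0 = ∅ := by
  simp [invCol]

lemma weakLE_iff_invCol_subset {π σ : Equiv.Perm (Fin n)} :
    weakLE π σ ↔ ∀ j, invCol π j ⊆ invCol σ j := by
  simp only [weakLE, Set.subset_def, Finset.subset_iff, mem_invCol]
  exact ⟨fun h j a ha => h _ ha, fun h p hp => h p.2 hp⟩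

lemma exists_toColex_invCol_lt_of_not_weakLE {π σ : Equiv.Perm (Fin n)} (h : ¬ weakLE π σ) :
    ∃ j, toColex (invCol σ j) < toColex (invCol π j) := by
  obtain ⟨⟨i₀, j₀⟩, h₀⟩ := Set.not_subset.1 h
  obtain ⟨j, ⟨i, hiπ, hiσ⟩, hmin⟩ :=
    wellFounded_lt.has_min {j | ∃ i, (i, j) ∈ invSet π \ invSet σ} ⟨j₀, i₀, h₀⟩
  obtain ⟨hij, hπ⟩ := hiπ
  have hσ : σ i < σ j := (σ.injective.ne hij.ne).lt_of_le (not_lt.1 fun h => hiσ ⟨hij, h⟩)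
  refine ⟨j, toColex_lt_toColex_iff_exists_forall_lt.2 ⟨i, mem_invCol.2 ⟨hij, hπ⟩,
    fun h => hiσ (mem_invCol.1 h), fun a haσ haπ => ?_⟩⟩
  simp only [invCol, Finset.mem_filter, Finset.mem_univ, true_and, not_and, not_lt] at haσ haπ
  obtain ⟨haj, hσa⟩ := haσ
  have hπa : π a < π j := (π.injective.ne haj.ne).lt_of_le (haπ haj)
  by_contra! hia
  have hia : i < a := hia.lt_of_ne (by rintro rfl; exact lt_asymm hσ hσa)
  exact hmin a ⟨i, ⟨hia, hπa.trans hπ⟩, fun h => lt_asymm h.2 (hσ.trans hσa)⟩ haj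

lemma weakLE_iff_toColex_invCol_le {π σ : Equiv.Perm (Fin n)} :
    weakLE π σ ↔ ∀ j, toColex (invCol π j) ≤ toColex (invCol σ j) := by
  refine ⟨fun h j => toColex_le_toColex_of_subset (weakLE_iff_invCol_subset.1 h j),
    fun h => ?_⟩
  by_contra hπσ
  obtain ⟨j, hj⟩ := exists_toColex_invCol_lt_of_not_weakLE hπσ
  exact (h j).not_gt hj

end InversionSets

lemma exists_weakLE_embedding (k : ℕ) :
    ∃ f : Equiv.Perm (Fin (k + 1)) → Fin k → ℝ, ∀ π σ, weakLE π σ ↔ ∀ i, f π i ≤ f σ i := by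
  refine ⟨fun π i => ((∑ a ∈ invCol π i.succ, 2 ^ (a : ℕ) : ℕ) : ℝ), fun π σ => ?_⟩
  simp only [Nat.cast_le, Fin.geomSum_le_geomSum_iff_toColex_le_toColex le_rfl]
  rw [weakLE_iff_toColex_invCol_le, Fin.forall_fin_succ, invCol_zero, invCol_zero]
  exact and_iff_right le_rfl

lemma le_of_weakLE_embedding {k d : ℕ} (f : Equiv.Perm (Fin (k + 1)) → Fin d → ℝ)
    (hf : ∀ π σ, weakLE π σ ↔ ∀ i, f π i ≤ f σ i) : k ≤ d := by
  let s : Fin k → Equiv.Perm (Fin (k + 1)) := fun m => Equiv.swap m.castSucc m.succ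
  have hs : ∀ m l, weakLE (s m) (Fin.revPerm * s l) ↔ m ≠ l := fun m l => by
    simp only [weakLE, invSet_revPerm_mul, invSet_swap_castSucc_succ, s, Set.singleton_subset_iff,
      Set.mem_sdiff, Set.mem_ofPred_eq, Set.mem_singleton_iff, Prod.mk.injEq, Fin.castSucc_lt_succ,
      true_and, Fin.castSucc_inj, Fin.succ_inj, and_self]
  simpa using card_le_card_of_standardExample f s (fun m => Fin.revPerm * s m)
    (fun m h => (hs m m).1 ((hf _ _).2 h) rfl) fun m l hml => (hf _ _).1 ((hs m l).2 hml)

theorem orderDim_weakOrder_symmetricGroup_general (n : ℕ) :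
    sInf {d : ℕ | ∃ f : Equiv.Perm (Fin n) → (Fin d → ℝ),
      ∀ π σ : Equiv.Perm (Fin n), weakLE π σ ↔ ∀ i, f π i ≤ f σ i} = n - 1 := by
  rcases n with _ | k
  · exact Nat.sInf_eq_zero.2 <| Or.inl ⟨fun _ _ => 0, fun π σ => by
      simp [Subsingleton.elim π σ, weakLE]⟩
  · rw [Nat.add_sub_cancel]
    exact le_antisymm (Nat.sInf_le (exists_weakLE_embedding k))
      (le_csInf ⟨k, exists_weakLE_embedding k⟩ fun d ⟨f, hf⟩ => le_of_weakLE_embedding f hf)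

/-- **Theorem (Reading, Theorem 1, type A).** For `n ≥ 2`, the order dimension of the weak
order on the symmetric group `Sₙ` equals `n − 1`: the least `d` such that the weak order
embeds as an induced subposet of ℝᵈ with the componentwise order is `n − 1`. -/
theorem orderDim_weakOrder_symmetricGroup (n : ℕ) (hn : 2 ≤ n) :
    sInf {d : ℕ | ∃ f : Equiv.Perm (Fin n) → (Fin d → ℝ),
      ∀ π σ : Equiv.Perm (Fin n), weakLE π σ ↔ ∀ i, f π i ≤ f σ i} = n - 1 :=
  orderDim_weakOrder_symmetricGroup_general n
end
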